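/- (Appendix, Case 2.) For the shared Werner state ρ_W(p) with 0 ≤ p ≤ 1, Bob's normalized reduced state after the PT evolution with Alice applying A₊ = 1 is explicitly ρ_B' = (Tr_A ρ₊)/Re(trace ρ₊) = !![1/2, Complex.I·p·sin α/(1+sin²α); −Complex.I·p·sin α/(1+sin²α), 1/2]. Consequently, ρ_B' equals Bob's initial reduced state (1/2)•1 (the maximally mixed qubit) if and only if p·sin α = 0. -/

import Mathlib

open Matrix Kronecker Complex
open scoped ComplexOrder

noncomputable section

/-- Pauli matrix `σx`. -/
def σx : Matrix (Fin 2) (Fin 2) ℂ := !![0, 1; 1, 0]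

/-- Pauli matrix `σy`. -/
def σy : Matrix (Fin 2) (Fin 2) ℂ := !![0, -Complex.I; Complex.I, 0]

/-- Pauli matrix `σz`. -/
def σz : Matrix (Fin 2) (Fin 2) ℂ := !![1, 0; 0, -1]

/-- The simulated PT-symmetric evolution operator at the chosen time. -/
def Upt (α : ℝ) : Matrix (Fin 2) (Fin 2) ℂ :=
  !![(Real.sin α : ℂ), -Complex.I; -Complex.I, -(Real.sin α : ℂ)]

/-- Alice's operation `A₊` (do nothing). -/
def Apos : Matrix (Fin 2) (Fin 2) ℂ := 1

/-- Alice's operation `A₋` (bit flip `σx`). -/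
def Aneg : Matrix (Fin 2) (Fin 2) ℂ := σx

/-- Unnormalized post-selected state after Alice applies `A₊` followed by the
simulated PT evolution. -/
def postPlus (α : ℝ) (ρ : Matrix (Fin 2 × Fin 2) (Fin 2 × Fin 2) ℂ) :
    Matrix (Fin 2 × Fin 2) (Fin 2 × Fin 2) ℂ :=
  ((Upt α * Apos) ⊗ₖ (1 : Matrix (Fin 2) (Fin 2) ℂ)) * ρ *
    ((Upt α * Apos) ⊗ₖ (1 : Matrix (Fin 2) (Fin 2) ℂ))ᴴ

/-- Unnormalized post-selected state after Alice applies `A₋` followed by the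
simulated PT evolution. -/
def postMinus (α : ℝ) (ρ : Matrix (Fin 2 × Fin 2) (Fin 2 × Fin 2) ℂ) :
    Matrix (Fin 2 × Fin 2) (Fin 2 × Fin 2) ℂ :=
  ((Upt α * Aneg) ⊗ₖ (1 : Matrix (Fin 2) (Fin 2) ℂ)) * ρ *
    ((Upt α * Aneg) ⊗ₖ (1 : Matrix (Fin 2) (Fin 2) ℂ))ᴴ

/-- Probability that Bob obtains outcome `Π` given Alice applied `A₊`. -/
def Pplus (α : ℝ) (ρ : Matrix (Fin 2 × Fin 2) (Fin 2 × Fin 2) ℂ)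
    (Pi : Matrix (Fin 2) (Fin 2) ℂ) : ℝ :=
  ((((1 : Matrix (Fin 2) (Fin 2) ℂ) ⊗ₖ Pi) * postPlus α ρ).trace).re /
    ((postPlus α ρ).trace).re

/-- Probability that Bob obtains outcome `Π` given Alice applied `A₋`. -/
def Pminus (α : ℝ) (ρ : Matrix (Fin 2 × Fin 2) (Fin 2 × Fin 2) ℂ)
    (Pi : Matrix (Fin 2) (Fin 2) ℂ) : ℝ :=
  ((((1 : Matrix (Fin 2) (Fin 2) ℂ) ⊗ₖ Pi) * postMinus α ρ).trace).re /
    ((postMinus α ρ).trace).re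

/-- Bob's `σy`-measurement projector onto `|+_y⟩ = (|0⟩ + i|1⟩)/√2`. -/
def Piy : Matrix (Fin 2) (Fin 2) ℂ :=
  (1/2 : ℂ) • !![1, -Complex.I; Complex.I, 1]

/-- Bob's rank-one projector `Π(z,u)` for an arbitrary projective measurement. -/
def Pizu (z u : ℝ) : Matrix (Fin 2) (Fin 2) ℂ :=
  !![((Real.cos (z/2))^2 : ℂ),
     (Real.cos (z/2) : ℂ) * (Real.sin (z/2) : ℂ) * Complex.exp (-(Complex.I * u));
     (Real.cos (z/2) : ℂ) * (Real.sin (z/2) : ℂ) * Complex.exp (Complex.I * u),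
     ((Real.sin (z/2))^2 : ℂ)]

/-- The single-qubit state `|+⟩ = (|0⟩ + |1⟩)/√2`. -/
def ketPlus : Fin 2 → ℂ := ![((1 / Real.sqrt 2 : ℝ) : ℂ), ((1 / Real.sqrt 2 : ℝ) : ℂ)]

/-- The single-qubit state `|−⟩ = (|0⟩ − |1⟩)/√2`. -/
def ketMinus : Fin 2 → ℂ := ![((1 / Real.sqrt 2 : ℝ) : ℂ), ((-(1 / Real.sqrt 2) : ℝ) : ℂ)]

/-- The (normalized) pure state `|ψ_{β,γ}⟩ = (β|++⟩ + γ|−−⟩)/√(β²+γ²)`. -/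
def ψpure (β γ : ℝ) : Fin 2 × Fin 2 → ℂ := fun q =>
  ((β : ℂ) * (ketPlus q.1 * ketPlus q.2) + (γ : ℂ) * (ketMinus q.1 * ketMinus q.2)) /
    ((Real.sqrt (β^2 + γ^2) : ℝ) : ℂ)

/-- The pure two-qubit density matrix `ρ_{β,γ} = |ψ_{β,γ}⟩⟨ψ_{β,γ}|`. -/
def ρpure (β γ : ℝ) : Matrix (Fin 2 × Fin 2) (Fin 2 × Fin 2) ℂ :=
  Matrix.vecMulVec (ψpure β γ) (fun q => starRingEnd ℂ (ψpure β γ q))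

/-- The maximally entangled state `|ψ⁺⟩ = (|00⟩ + |11⟩)/√2`. -/
def ψmax : Fin 2 × Fin 2 → ℂ := fun q =>
  if q.1 = q.2 then ((1 / Real.sqrt 2 : ℝ) : ℂ) else 0

/-- The two-qubit Werner state `ρ_W(p) = p |ψ⁺⟩⟨ψ⁺| + ((1-p)/4) 1`. -/
def ρWerner (p : ℝ) : Matrix (Fin 2 × Fin 2) (Fin 2 × Fin 2) ℂ :=
  (p : ℂ) • Matrix.vecMulVec ψmax (fun q => starRingEnd ℂ (ψmax q)) +
    (((1 - p) / 4 : ℝ) : ℂ) • 1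

/-- The canonical two-qubit state with magnetizations `mx my mz` (Alice),
`nx ny nz` (Bob) and diagonal correlators `Cxx Cyy Czz`. -/
def ρcan (mx my mz nx ny nz Cxx Cyy Czz : ℝ) :
    Matrix (Fin 2 × Fin 2) (Fin 2 × Fin 2) ℂ :=
  (1/4 : ℂ) • ((1 : Matrix (Fin 2 × Fin 2) (Fin 2 × Fin 2) ℂ)
    + (mx : ℂ) • (σx ⊗ₖ (1 : Matrix (Fin 2) (Fin 2) ℂ))
    + (my : ℂ) • (σy ⊗ₖ (1 : Matrix (Fin 2) (Fin 2) ℂ))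
    + (mz : ℂ) • (σz ⊗ₖ (1 : Matrix (Fin 2) (Fin 2) ℂ))
    + (nx : ℂ) • ((1 : Matrix (Fin 2) (Fin 2) ℂ) ⊗ₖ σx)
    + (ny : ℂ) • ((1 : Matrix (Fin 2) (Fin 2) ℂ) ⊗ₖ σy)
    + (nz : ℂ) • ((1 : Matrix (Fin 2) (Fin 2) ℂ) ⊗ₖ σz)
    + (Cxx : ℂ) • (σx ⊗ₖ σx)
    + (Cyy : ℂ) • (σy ⊗ₖ σy)
    + (Czz : ℂ) • (σz ⊗ₖ σz))

/-- Bob's reduced matrix: the partial trace over Alice's subsystem. -/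
def ptraceA (X : Matrix (Fin 2 × Fin 2) (Fin 2 × Fin 2) ℂ) :
    Matrix (Fin 2) (Fin 2) ℂ :=
  Matrix.of fun i j => ∑ k : Fin 2, X (k, i) (k, j)

/-- The positive semidefinite square root, as defined in the older Mathlib
(`Matrix.PosSemidef.sqrt`, since removed). -/
def Matrix.PosSemidef.sqrt {n : Type*} [Fintype n] [DecidableEq n] {𝕜 : Type*} [RCLike 𝕜]
    {A : Matrix n n 𝕜} (hA : A.PosSemidef) : Matrix n n 𝕜 :=
  hA.1.eigenvectorUnitary.1 * diagonal ((↑) ∘ Real.sqrt ∘ hA.1.eigenvalues) *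
    (star hA.1.eigenvectorUnitary : Matrix n n 𝕜)

/-- The trace distance `T(A,B) = (1/2) tr √((A-B)ᴴ (A-B))`, where the square
root is the positive semidefinite square root. -/
def traceDist (A B : Matrix (Fin 2) (Fin 2) ℂ) : ℝ :=
  (1/2) * (((Matrix.posSemidef_conjTranspose_mul_self (A - B)).sqrt).trace).re

/-! Bob's reduced matrix is linear in the shared state, and for a local operator `A ⊗ 1`
applied to `|ψ⁺⟩` it is `(Aᴴ A)ᵀ / 2`, since `(A ⊗ 1)|ψ⁺⟩` has amplitudes `A k i / √2`;
on the identity part it is `tr (A Aᴴ) • 1`. For `A = U_α` this gives `(1 + sin² α)` times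
the claimed matrix, which has trace one, so `1 + sin² α` is exactly the normalization. -/

theorem ptraceA_add (X Y : Matrix (Fin 2 × Fin 2) (Fin 2 × Fin 2) ℂ) :
    ptraceA (X + Y) = ptraceA X + ptraceA Y := by
  ext i j
  simp only [ptraceA, Matrix.add_apply, of_apply, Finset.sum_add_distrib]

theorem ptraceA_smul (c : ℂ) (X : Matrix (Fin 2 × Fin 2) (Fin 2 × Fin 2) ℂ) :
    ptraceA (c • X) = c • ptraceA X := by
  ext i j
  simp only [ptraceA, Matrix.smul_apply, of_apply, smul_eq_mul, Finset.mul_sum]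

theorem ptraceA_kronecker (A B : Matrix (Fin 2) (Fin 2) ℂ) :
    ptraceA (A ⊗ₖ B) = A.trace • B := by
  ext i j
  simp only [ptraceA, of_apply, kroneckerMap_apply, Matrix.smul_apply, smul_eq_mul, Matrix.trace,
    diag_apply, Finset.sum_mul]

theorem trace_ptraceA (X : Matrix (Fin 2 × Fin 2) (Fin 2 × Fin 2) ℂ) :
    (ptraceA X).trace = X.trace := by
  simp only [Matrix.trace, ptraceA, diag_apply, of_apply, Fintype.sum_prod_type]
  exact Finset.sum_comm

theorem ψmax_mul_conj (q q' : Fin 2 × Fin 2) :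
    ψmax q * starRingEnd ℂ (ψmax q') = if q.1 = q.2 ∧ q'.1 = q'.2 then 1 / 2 else 0 := by
  have h : ((1 / Real.sqrt 2 : ℝ) : ℂ) * ((1 / Real.sqrt 2 : ℝ) : ℂ) = 1 / 2 := by
    rw [← Complex.ofReal_mul, div_mul_div_comm, Real.mul_self_sqrt (by norm_num)]; norm_num
  unfold ψmax
  split_ifs <;> simp_all

theorem ptraceA_conj_maxEntangled (A : Matrix (Fin 2) (Fin 2) ℂ) :
    ptraceA ((A ⊗ₖ (1 : Matrix (Fin 2) (Fin 2) ℂ)) *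
        vecMulVec ψmax (fun q => starRingEnd ℂ (ψmax q)) *
        (A ⊗ₖ (1 : Matrix (Fin 2) (Fin 2) ℂ))ᴴ) = (1 / 2 : ℂ) • (Aᴴ * A)ᵀ := by
  ext i j
  fin_cases i <;> fin_cases j <;>
  · simp [ptraceA, Matrix.mul_apply, vecMulVec_apply, ψmax_mul_conj, Fintype.sum_prod_type,
      Fin.sum_univ_two, one_apply]
    ring

theorem ptraceA_conj_kronecker_one (A : Matrix (Fin 2) (Fin 2) ℂ) :
    ptraceA ((A ⊗ₖ (1 : Matrix (Fin 2) (Fin 2) ℂ)) * (A ⊗ₖ (1 : Matrix (Fin 2) (Fin 2) ℂ))ᴴ) =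
      (A * Aᴴ).trace • 1 := by
  rw [conjTranspose_kronecker, conjTranspose_one, ← mul_kronecker_mul, Matrix.mul_one,
    ptraceA_kronecker]

theorem ptraceA_conj_werner (A : Matrix (Fin 2) (Fin 2) ℂ) (p : ℝ) :
    ptraceA ((A ⊗ₖ (1 : Matrix (Fin 2) (Fin 2) ℂ)) * ρWerner p *
        (A ⊗ₖ (1 : Matrix (Fin 2) (Fin 2) ℂ))ᴴ) =
      ((p : ℂ) / 2) • (Aᴴ * A)ᵀ + ((((1 - p) / 4 : ℝ) : ℂ) * (A * Aᴴ).trace) • 1 := by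
  rw [ρWerner, Matrix.mul_add, Matrix.add_mul, Matrix.mul_smul, Matrix.smul_mul, Matrix.mul_smul,
    Matrix.smul_mul, Matrix.mul_one, ptraceA_add, ptraceA_smul, ptraceA_smul,
    ptraceA_conj_maxEntangled, ptraceA_conj_kronecker_one, smul_smul, smul_smul]
  ring_nf

theorem conjTranspose_Upt_mul_Upt (α : ℝ) :
    (Upt α)ᴴ * Upt α = !![1 + (Real.sin α : ℂ) ^ 2, -2 * I * Real.sin α;
      2 * I * Real.sin α, 1 + (Real.sin α : ℂ) ^ 2] := by
  ext i j
  fin_cases i <;> fin_cases j <;>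
  · simp [Upt, Matrix.mul_apply, Fin.sum_univ_two, -Complex.ofReal_sin]
    ring

theorem trace_Upt_mul_conjTranspose (α : ℝ) :
    (Upt α * (Upt α)ᴴ).trace = 2 * (1 + (Real.sin α : ℂ) ^ 2) := by
  simp only [Matrix.trace, diag_apply, Fin.sum_univ_two, Matrix.mul_apply]
  simp [Upt, -Complex.ofReal_sin]
  ring

def bobStateWerner (α p : ℝ) : Matrix (Fin 2) (Fin 2) ℂ :=
  !![(1/2 : ℂ),
      Complex.I * (p : ℂ) * (Real.sin α : ℂ) / (1 + ((Real.sin α)^2 : ℝ));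
     -(Complex.I * (p : ℂ) * (Real.sin α : ℂ) / (1 + ((Real.sin α)^2 : ℝ))),
      (1/2 : ℂ)]

theorem ptraceA_postPlus_werner (α p : ℝ) :
    ptraceA (postPlus α (ρWerner p)) = (1 + Real.sin α ^ 2) • bobStateWerner α p := by
  have hpos : (1 + (Real.sin α : ℂ) ^ 2) ≠ 0 := by
    exact_mod_cast (by positivity : (0 : ℝ) < 1 + Real.sin α ^ 2).ne'
  rw [postPlus, Apos, Matrix.mul_one, ptraceA_conj_werner, conjTranspose_Upt_mul_Upt,
    trace_Upt_mul_conjTranspose]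
  ext i j
  fin_cases i <;> fin_cases j <;> simp [bobStateWerner, Complex.real_smul, -Complex.ofReal_sin] <;>
    field_simp <;> ring

theorem trace_bobStateWerner (α p : ℝ) : (bobStateWerner α p).trace = 1 := by
  norm_num [bobStateWerner, Matrix.trace]

theorem re_trace_postPlus_werner (α p : ℝ) :
    (postPlus α (ρWerner p)).trace.re = 1 + Real.sin α ^ 2 := by
  rw [← trace_ptraceA, ptraceA_postPlus_werner, trace_smul, trace_bobStateWerner,
    Complex.real_smul, mul_one, Complex.ofReal_re]

theorem bobStateWerner_eq_half_one_iff (α p : ℝ) :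
    bobStateWerner α p = (1/2 : ℂ) • (1 : Matrix (Fin 2) (Fin 2) ℂ) ↔ p * Real.sin α = 0 := by
  have hpos : (1 + (Real.sin α : ℂ) ^ 2) ≠ 0 := by
    exact_mod_cast (by positivity : (0 : ℝ) < 1 + Real.sin α ^ 2).ne'
  constructor
  · intro h
    have h01 := congrFun (congrFun h 0) 1
    simp [bobStateWerner, -Complex.ofReal_sin, hpos] at h01
    exact mul_eq_zero.mpr h01
  · intro h
    have h' : (p : ℂ) * Real.sin α = 0 := by exact_mod_cast h
    ext i j
    fin_cases i <;> fin_cases j <;> simp [bobStateWerner, mul_assoc, h', -Complex.ofReal_sin]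

theorem stmt16_general (α p : ℝ) :
    (((postPlus α (ρWerner p)).trace).re)⁻¹ • ptraceA (postPlus α (ρWerner p)) =
      !![(1/2 : ℂ),
          Complex.I * (p : ℂ) * (Real.sin α : ℂ) / (1 + ((Real.sin α)^2 : ℝ));
         -(Complex.I * (p : ℂ) * (Real.sin α : ℂ) / (1 + ((Real.sin α)^2 : ℝ))),
          (1/2 : ℂ)] ∧
    ((((postPlus α (ρWerner p)).trace).re)⁻¹ • ptraceA (postPlus α (ρWerner p)) =
        (1/2 : ℂ) • (1 : Matrix (Fin 2) (Fin 2) ℂ) ↔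
      p * Real.sin α = 0) := by
  rw [re_trace_postPlus_werner, ptraceA_postPlus_werner, inv_smul_smul₀ (by positivity)]
  exact ⟨rfl, bobStateWerner_eq_half_one_iff α p⟩

/-- Appendix, Case 2: for the shared Werner state `ρ_W(p)`, Bob's normalized
reduced state after the PT evolution (Alice applying `A₊ = 1`) is
`!![1/2, i p sin α/(1+sin²α); −i p sin α/(1+sin²α), 1/2]`; consequently it
equals the maximally mixed qubit iff `p sin α = 0`. -/
theorem stmt16 (α p : ℝ) (hp0 : 0 ≤ p) (hp1 : p ≤ 1) :
    (((postPlus α (ρWerner p)).trace).re)⁻¹ • ptraceA (postPlus α (ρWerner p)) =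
      !![(1/2 : ℂ),
          Complex.I * (p : ℂ) * (Real.sin α : ℂ) / (1 + ((Real.sin α)^2 : ℝ));
         -(Complex.I * (p : ℂ) * (Real.sin α : ℂ) / (1 + ((Real.sin α)^2 : ℝ))),
          (1/2 : ℂ)] ∧
    ((((postPlus α (ρWerner p)).trace).re)⁻¹ • ptraceA (postPlus α (ρWerner p)) =
        (1/2 : ℂ) • (1 : Matrix (Fin 2) (Fin 2) ℂ) ↔
      p * Real.sin α = 0) :=
  stmt16_general α p
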